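/- arXiv:1111.3588 — 3 statements merged into one kernel-verified Lean document; each statement's English description precedes it below -/
import Mathlib

section
/- Let k ≥ 2 be an integer and let j be an integer with 1 ≤ j ≤ k. For every a = (a_1, …, a_k) ∈ ℝ^k, (w_{k+1}^{-1} ∘ w_k ∘ w_j^{-1})(a_1, …, a_k) = (a_j + 2, a_1, …, a_{j−1}, a_{j+1}, …, a_k); that is, the j-th coordinate, increased by 2, is moved to the front and all other coordinates keep their relative order. -/
/-- The level-one (affine) action of the simple generator `s i` of the affine Weyl
group of type `C_k^{(1)}` on `ℝ^k` (coordinates are `0`-indexed, so the `1`-indexed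
coordinate `a_m` of the paper is `a ⟨m-1, _⟩`):
`σ_0` sends `a_1 ↦ 2 - a_1`, `σ_i` (for `1 ≤ i ≤ k-1`) swaps `a_i` and `a_{i+1}`,
and `σ_k` sends `a_k ↦ -a_k`. -/
noncomputable def sigmaC (k : ℕ) (i : ℕ) (a : Fin k → ℝ) : Fin k → ℝ := fun t =>
  if i = 0 then (if (t : ℕ) = 0 then 2 - a t else a t)
  else if i = k then (if (t : ℕ) = k - 1 then -(a t) else a t)
  else if hik : i < k then
    (if (t : ℕ) = i - 1 then a ⟨i, hik⟩
     else if (t : ℕ) = i then a ⟨i - 1, by omega⟩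
     else a t)
  else a t

/-- `wC k i = σ_{i-1} ∘ σ_{i-2} ∘ ⋯ ∘ σ_1 ∘ σ_0` (the rightmost factor applied first). -/
noncomputable def wC (k i : ℕ) (a : Fin k → ℝ) : Fin k → ℝ :=
  (List.range i).foldl (fun b m => sigmaC k m b) a


noncomputable def extA (k : ℕ) (a : Fin k → ℝ) (n : ℕ) : ℝ :=
  if h : n < k then a ⟨n, h⟩ else 0

lemma extA_mk (k : ℕ) (a : Fin k → ℝ) (n : ℕ) (h : n < k) :
    extA k a n = a ⟨n, h⟩ := dif_pos h

lemma extA_coe (k : ℕ) (a : Fin k → ℝ) (t : Fin k) : extA k a (t : ℕ) = a t := by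
  rw [extA_mk k a _ t.isLt]

lemma extA_congr (k : ℕ) (a : Fin k → ℝ) {m n : ℕ} (h : m = n) :
    extA k a m = extA k a n := by rw [h]

lemma wC_succ (k i : ℕ) (a : Fin k → ℝ) : wC k (i+1) a = sigmaC k i (wC k i a) := by
  simp [wC, List.range_succ]

lemma wC_apply (k : ℕ) (i : ℕ) (hi : 1 ≤ i) (hik : i ≤ k) (a : Fin k → ℝ) (t : Fin k) :
    wC k i a t =
      if (t : ℕ) + 1 < i then extA k a ((t : ℕ) + 1)
      else if (t : ℕ) + 1 = i then 2 - extA k a 0 else a t := by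
  induction i, hi using Nat.le_induction generalizing t with
  | base =>
    have h1 : wC k 1 a = sigmaC k 0 a := by
      have := wC_succ k 0 a
      simpa [wC] using this
    rw [h1]
    simp only [sigmaC, if_pos rfl]
    by_cases h : (t : ℕ) = 0
    · have ht : t = ⟨0, by omega⟩ := Fin.ext h
      rw [ht]
      simp [extA, show (0:ℕ) < k by omega]
    · simp [h]
  | succ i hi ih =>
    have hik' : i ≤ k := by omega
    have hilt : i < k := by omega
    rw [wC_succ]
    have hne0 : ¬ (i = 0) := by omega
    have hnek : ¬ (i = k) := by omega
    simp only [sigmaC, if_neg hne0, if_neg hnek, dif_pos hilt]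
    by_cases h1 : (t : ℕ) = i - 1
    · rw [if_pos h1, ih hik' ⟨i, hilt⟩]
      simp only [Fin.val_mk]
      rw [if_neg (by omega : ¬ i + 1 < i), if_neg (by omega : ¬ i + 1 = i),
        if_pos (by omega : (t : ℕ) + 1 < i + 1)]
      exact (extA_mk k a i hilt).symm.trans (extA_congr k a (by omega))
    · rw [if_neg h1]
      by_cases h2 : (t : ℕ) = i
      · rw [if_pos h2, ih hik' ⟨i - 1, by omega⟩]
        simp only [Fin.val_mk]
        rw [if_neg (by omega : ¬ i - 1 + 1 < i), if_pos (by omega : i - 1 + 1 = i),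
          if_neg (by omega : ¬ (t : ℕ) + 1 < i + 1), if_pos (by omega : (t : ℕ) + 1 = i + 1)]
      · rw [if_neg h2, ih hik' t]
        by_cases h3 : (t : ℕ) + 1 < i
        · rw [if_pos h3, if_pos (by omega)]
        · rw [if_neg h3, if_neg (by omega), if_neg (by omega), if_neg (by omega)]

lemma wC_apply_top (k : ℕ) (hk : 1 ≤ k) (a : Fin k → ℝ) (t : Fin k) :
    wC k (k + 1) a t =
      if (t : ℕ) + 1 = k then extA k a 0 - 2
      else extA k a ((t : ℕ) + 1) := by
  rw [wC_succ]
  have hs : sigmaC k k (wC k k a) t =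
      if (t : ℕ) = k - 1 then -(wC k k a t) else wC k k a t := by
    have h0 : ¬ k = 0 := by omega
    simp [sigmaC, h0]
  rw [hs, wC_apply k k hk le_rfl]
  by_cases h : (t : ℕ) = k - 1
  · rw [if_pos h, if_neg (by omega), if_pos (by omega), if_pos (by omega)]
    ring
  · rw [if_neg h, if_pos (by omega : (t:ℕ) + 1 < k), if_neg (by omega)]


/-- For `1 ≤ j ≤ k`, the map `w_{k+1}⁻¹ ∘ w_k ∘ w_j⁻¹` sends
`(a_1, …, a_k)` to `(a_j + 2, a_1, …, a_{j-1}, a_{j+1}, …, a_k)`.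
Here `gj` and `gk1` are the (two-sided) inverses of `w_j` and `w_{k+1}`. -/
theorem stmt2 (k : ℕ) (hk : 2 ≤ k) (j : ℕ) (hj1 : 1 ≤ j) (hjk : j ≤ k)
    (gj gk1 : (Fin k → ℝ) → (Fin k → ℝ))
    (hgj₁ : Function.LeftInverse gj (wC k j))
    (hgj₂ : Function.RightInverse gj (wC k j))
    (hgk₁ : Function.LeftInverse gk1 (wC k (k + 1)))
    (hgk₂ : Function.RightInverse gk1 (wC k (k + 1)))
    (a : Fin k → ℝ) (t : Fin k) :
    gk1 (wC k k (gj a)) t =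
      if (t : ℕ) = 0 then a ⟨j - 1, by omega⟩ + 2
      else if (t : ℕ) ≤ j - 1 then a ⟨(t : ℕ) - 1, lt_of_le_of_lt (Nat.sub_le _ _) t.isLt⟩
      else a t := by
  set b : Fin k → ℝ := fun s =>
    if (s : ℕ) = 0 then 2 - extA k a (j - 1)
    else if (s : ℕ) ≤ j - 1 then extA k a ((s : ℕ) - 1) else a s with hbdef
  have hbev : ∀ (n : ℕ) (h : n < k), b ⟨n, h⟩ =
      if n = 0 then 2 - extA k a (j - 1)
      else if n ≤ j - 1 then extA k a (n - 1) else a ⟨n, h⟩ := fun n h => rfl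
  have hwb : wC k j b = a := by
    funext s
    rw [wC_apply k j hj1 hjk]
    by_cases h1 : (s : ℕ) + 1 < j
    · have hlt : (s : ℕ) + 1 < k := by omega
      rw [if_pos h1, extA_mk k b _ hlt, hbev _ hlt, if_neg (by omega), if_pos (by omega)]
      exact (extA_congr k a (by omega)).trans (extA_coe k a s)
    · rw [if_neg h1]
      by_cases h2 : (s : ℕ) + 1 = j
      · rw [if_pos h2, extA_mk k b 0 (by omega), hbev 0 (by omega), if_pos rfl,
          show extA k a (j-1) = a s from
            (extA_congr k a (by omega : j - 1 = (s:ℕ))).trans (extA_coe k a s)]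
        ring
      · rw [if_neg h2, hbdef]
        simp only
        rw [if_neg (by omega), if_neg (by omega)]
  have hgja : gj a = b := by rw [← hwb, hgj₁]
  set r : Fin k → ℝ := fun s =>
    if (s : ℕ) = 0 then extA k a (j - 1) + 2
    else if (s : ℕ) ≤ j - 1 then extA k a ((s : ℕ) - 1) else a s with hrdef
  have hrev : ∀ (n : ℕ) (h : n < k), r ⟨n, h⟩ =
      if n = 0 then extA k a (j - 1) + 2
      else if n ≤ j - 1 then extA k a (n - 1) else a ⟨n, h⟩ := fun n h => rfl
  have hwr : wC k (k + 1) r = wC k k b := by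
    funext s
    rw [wC_apply_top k (by omega), wC_apply k k (by omega) le_rfl]
    by_cases h1 : (s : ℕ) + 1 = k
    · rw [if_pos h1, if_neg (by omega), if_pos h1,
        extA_mk k r 0 (by omega), hrev 0 (by omega), if_pos rfl,
        extA_mk k b 0 (by omega), hbev 0 (by omega), if_pos rfl]
      ring
    · have h1' : (s : ℕ) + 1 < k := by omega
      rw [if_neg h1, if_pos h1', extA_mk k r _ h1', hrev _ h1',
        extA_mk k b _ h1', hbev _ h1']
      by_cases h2 : (s : ℕ) + 1 ≤ j - 1
      · rw [if_neg (by omega : ¬ (s : ℕ) + 1 = 0), if_neg (by omega : ¬ (s : ℕ) + 1 = 0),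
          if_pos h2]
      · rw [if_neg (by omega : ¬ (s : ℕ) + 1 = 0), if_neg (by omega : ¬ (s : ℕ) + 1 = 0),
          if_neg h2]
  have hfin : gk1 (wC k k b) = r := by rw [← hwr, hgk₁]
  rw [hgja, hfin, show r t = r ⟨(t : ℕ), t.isLt⟩ from rfl, hrev _ t.isLt]
  by_cases h0 : (t : ℕ) = 0
  · rw [if_pos h0, if_pos h0, extA_mk k a (j-1) (by omega)]
  · rw [if_neg h0, if_neg h0]
    by_cases h1 : (t : ℕ) ≤ j - 1
    · rw [if_pos h1, if_pos h1, extA_mk k a _ (lt_of_le_of_lt (Nat.sub_le _ _) t.isLt)]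
    · rw [if_neg h1, if_neg h1]
end

section
/- Let k ≥ 2 be an integer and let i be an integer with 1 ≤ i ≤ k. Applying to the empty partition the word (s_0 s_1 ⋯ s_{i−1})(s_0 s_1 ⋯ s_{i−2}) ⋯ (s_0 s_1)(s_0) — that is, applying the maps f along this word with the rightmost generator applied first — yields the i × i square partition (i, i, …, i) (i parts equal to i). In symbols, w_i^{-1} w_{i−1}^{-1} ⋯ w_1^{-1} · ∅ = (i^i), where w_m = s_{m−1} ⋯ s_1 s_0. -/
/-- The type-`C` residue of the cell in row `r`, column `c` (both `0`-indexed):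
with `d = (c - r) mod 2k`, the residue is `d` if `d ≤ k` and `2k - d` otherwise. -/
def resC (k : ℕ) (r c : ℕ) : ℤ :=
  if ((c : ℤ) - (r : ℤ)) % (2 * (k : ℤ)) ≤ (k : ℤ)
  then ((c : ℤ) - (r : ℤ)) % (2 * (k : ℤ))
  else 2 * (k : ℤ) - ((c : ℤ) - (r : ℤ)) % (2 * (k : ℤ))

/-- A partition is encoded by its row lengths `p : ℕ → ℕ` (rows `0`-indexed); its
Young diagram consists of the cells `(r, c)` with `c < p r` (columns `0`-indexed).
Row `r` has an addable cell of residue `i` iff the cell `(r, p r)` has residue `i`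
and adding it gives a Young diagram. -/
def AddableRow (k i : ℕ) (p : ℕ → ℕ) (r : ℕ) : Prop :=
  resC k r (p r) = (i : ℤ) ∧ (r = 0 ∨ p r < p (r - 1))

/-- Row `r` has a removable cell of residue `i` iff the last cell `(r, p r - 1)` of the
row exists, has residue `i`, and removing it gives a Young diagram. -/
def RemovableRow (k i : ℕ) (p : ℕ → ℕ) (r : ℕ) : Prop :=
  1 ≤ p r ∧ resC k r (p r - 1) = (i : ℤ) ∧ p (r + 1) < p r

open Classical in
/-- The Hanusa–Jones action of the simple generator `s_i` (for `0 ≤ i ≤ k`) of the affine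
Weyl group of type `C_k^{(1)}` on partitions: add all addable cells of residue `i` if any
exist; otherwise remove all removable cells of residue `i` if any exist; otherwise do
nothing. -/
noncomputable def hjAct (k i : ℕ) (p : ℕ → ℕ) : ℕ → ℕ :=
  if ∃ r, AddableRow k i p r then
    fun r => if AddableRow k i p r then p r + 1 else p r
  else if ∃ r, RemovableRow k i p r then
    fun r => if RemovableRow k i p r then p r - 1 else p r
  else p

def S (m j : ℕ) : ℕ → ℕ := fun r =>
  if r + j ≤ m then m + 1 else if r < m then m else if r = m then m + 1 - j else 0

lemma resC_le_case (k r c : ℕ) (hk : 0 < k) (h1 : r ≤ c) (h2 : c - r ≤ k) :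
    resC k r c = ((c - r : ℕ) : ℤ) := by
  have hmod : ((c:ℤ) - (r:ℤ)) % (2 * (k:ℤ)) = (c:ℤ) - (r:ℤ) :=
    Int.emod_eq_of_lt (by omega) (by omega)
  unfold resC
  rw [hmod, if_pos (by omega)]
  omega

lemma resC_gt_case (k r c : ℕ) (h1 : c < r) (h2 : r - c ≤ k) :
    resC k r c = ((r - c : ℕ) : ℤ) := by
  have hk : 0 < k := by omega
  have heq : (c:ℤ) - (r:ℤ) = (2*(k:ℤ) - ((r:ℤ) - c)) + (2*(k:ℤ)) * (-1) := by ring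
  have hmod : ((c:ℤ) - (r:ℤ)) % (2 * (k:ℤ)) = 2*(k:ℤ) - ((r:ℤ) - c) := by
    rw [heq, Int.add_mul_emod_self_left]
    exact Int.emod_eq_of_lt (by omega) (by omega)
  unfold resC
  rw [hmod]
  split_ifs with h <;> omega

lemma addable_iff (k m j : ℕ) (hm : m < k) (hj : j ≤ m) (r : ℕ) :
    AddableRow k j (S m (j+1)) r ↔ (r = m - j ∨ r = m) := by
  have hk : 0 < k := by omega
  constructor
  · rintro ⟨hres, hmono⟩
    by_contra hcon
    push_neg at hcon
    obtain ⟨h1, h2⟩ := hcon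
    rcases lt_trichotomy r m with hr | hr | hr
    · by_cases hA : r + (j+1) ≤ m
      · have hp : S m (j+1) r = m + 1 := by unfold S; rw [if_pos hA]
        rw [hp, resC_le_case k r (m+1) hk (by omega) (by omega)] at hres
        omega
      · have hp : S m (j+1) r = m := by unfold S; split_ifs <;> omega
        rw [hp, resC_le_case k r m hk (by omega) (by omega)] at hres
        omega
    · exact h2 hr
    · have hp : S m (j+1) r = 0 := by unfold S; split_ifs <;> omega
      rcases hmono with h0 | hlt
      · omega
      · rw [hp] at hlt
        have hr1 : r = m + 1 ∧ j < m := by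
          unfold S at hlt; split_ifs at hlt <;> omega
        rw [hp, hr1.1, resC_gt_case k (m+1) 0 (by omega) (by omega)] at hres
        omega
  · intro h
    rcases h with h | h
    · subst h
      have hp : S m (j+1) (m-j) = m := by unfold S; split_ifs <;> omega
      constructor
      · rw [hp, resC_le_case k (m-j) m hk (by omega) (by omega)]
        omega
      · by_cases h0 : m - j = 0
        · exact Or.inl h0
        · right
          rw [hp]
          have : S m (j+1) (m-j-1) = m + 1 := by unfold S; split_ifs <;> omega
          omega
    · subst h
      have hp : S r (j+1) r = r - j := by unfold S; split_ifs <;> omega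
      constructor
      · rw [hp]
        by_cases hj0 : j = 0
        · subst hj0
          rw [resC_le_case k r (r-0) hk (by omega) (by omega)]
          omega
        · rw [resC_gt_case k r (r-j) (by omega) (by omega)]
          omega
      · by_cases h0 : r = 0
        · exact Or.inl h0
        · right
          rw [hp]
          unfold S; split_ifs <;> omega

lemma key (k m j : ℕ) (hm : m < k) (hj : j ≤ m) :
    hjAct k j (S m (j+1)) = S m j := by
  unfold hjAct
  rw [if_pos ⟨m, (addable_iff k m j hm hj m).mpr (Or.inr rfl)⟩]
  funext r
  by_cases h : r = m - j ∨ r = m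
  · rw [if_pos ((addable_iff k m j hm hj r).mpr h)]
    unfold S; split_ifs <;> omega
  · rw [if_neg (fun ha => h ((addable_iff k m j hm hj r).mp ha))]
    unfold S; split_ifs <;> omega

lemma block (k m : ℕ) (hm : m < k) :
    ∀ j, j ≤ m + 1 →
      List.foldr (fun idx q => hjAct k idx q) (S m j) (List.range j) = S m 0 := by
  intro j
  induction j with
  | zero => intro _; simp
  | succ j ih =>
    intro h
    rw [List.range_succ, List.foldr_append]
    simp only [List.foldr_cons, List.foldr_nil]
    rw [key k m j hm (by omega)]
    exact ih (by omega)

lemma main (k : ℕ) :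
    ∀ i, i ≤ k →
      (((List.range i).reverse.map (fun m => List.range (m + 1))).flatten).foldr
        (fun idx q => hjAct k idx q) (fun _ => 0)
      = S i (i + 1) := by
  intro i
  induction i with
  | zero =>
    intro _
    funext r
    simp [S]
  | succ i ih =>
    intro h
    rw [List.range_succ, List.reverse_append]
    simp only [List.reverse_singleton, List.singleton_append, List.map_cons,
      List.flatten_cons, List.foldr_append]
    rw [ih (by omega)]
    have h1 : S i (i+1) = S i ((i+1) - 1 + 1) := by norm_num
    have h2 := block k i (by omega) (i+1) (by omega)
    rw [h2]
    funext r
    unfold S; split_ifs <;> omega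

/-- Applying the word `(s_0 s_1 ⋯ s_{i-1})(s_0 s_1 ⋯ s_{i-2}) ⋯ (s_0 s_1)(s_0)` (rightmost
generator first) to the empty partition yields the `i × i` square partition `(i^i)`. -/
theorem stmt7 (k : ℕ) (hk : 2 ≤ k) (i : ℕ) (hi1 : 1 ≤ i) (hik : i ≤ k) :
    (((List.range i).reverse.map (fun m => List.range (m + 1))).flatten).foldr
        (fun idx q => hjAct k idx q) (fun _ => 0)
      = fun r => if r < i then i else 0 := by
  rw [main k i hik]
  funext r
  unfold S; split_ifs <;> omega
end

section
/- Let k ≥ 2 be an integer and let j be an integer with 1 ≤ j ≤ k − 1. Applying to the empty partition the word ((s_j s_{j+1} ⋯ s_{k−1})(s_k s_{k−1} ⋯ s_1 s_0))^j — i.e., applying the maps f along this word with the rightmost generator applied first — yields the partition ((2k)^j, j^{2k−j}), which has j parts equal to 2k followed by 2k − j parts equal to j. (This is the symmetric 2k-core corresponding to the pseudo-translation z_{Λ_j^∨} = (w_j w_k^{-1} w_{k+1})^j in the affine Weyl group of type C_k^{(1)}.) -/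
lemma resC_eq_of (k r c : ℕ) (hk : 0 < k) (d : ℕ) (hd : d < 2*k) (q : ℤ)
    (h : (c:ℤ) - r = d + 2*k*q) :
    resC k r c = if d ≤ k then (d:ℤ) else 2*(k:ℤ) - d := by
  have hmod : ((c:ℤ) - r) % (2*(k:ℤ)) = d := by
    rw [h, show ((d:ℤ) + 2*k*q) = (d:ℤ) + (2*(k:ℤ))*q by ring, Int.add_mul_emod_self_left]
    exact Int.emod_eq_of_lt (by positivity) (by exact_mod_cast hd)
  unfold resC
  rw [hmod]
  by_cases hdk : d ≤ k
  · rw [if_pos (by exact_mod_cast hdk), if_pos hdk]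
  · rw [if_neg (by exact_mod_cast hdk), if_neg hdk]

/-- State after the ascending run `s_0 s_1 ⋯ s_t` within block `m`. -/
def ascP (k j m t : ℕ) : ℕ → ℕ := fun r =>
  if r < m then 2*k - j + m + (if j + r ≤ t + m then 1 else 0)
  else if r = m then m + t + 1
  else if r ≤ m + t then m + 1
  else if r < 2*k - j + m then m
  else if r = 2*k - j + m then (if t + 1 ≤ j then t + 1 + m - j else m)
  else 0

/-- State after the descending run down to `s_t` within block `m`. -/
def descP (k j m t : ℕ) : ℕ → ℕ := fun r =>
  if r < m then 2*k - j + m + 1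
  else if r = m then m + (2*k - t) + 1
  else if r ≤ m + (2*k - t) then m + 1
  else if r ≤ 2*k - j + m then m
  else 0

/-- State at the start of block `m`. -/
def startP (k j m : ℕ) : ℕ → ℕ := fun r =>
  if r < m then 2*k - j + m
  else if r < 2*k - j + m then m
  else 0
set_option maxHeartbeats 1000000 in

lemma stepA (k j m t : ℕ) (hk : 2 ≤ k) (hj1 : 1 ≤ j) (hjk : j + 1 ≤ k)
    (hm : m < j) (ht : t < k) :
    hjAct k (t+1) (ascP k j m t) = ascP k j m (t+1) := by
  have haddm : AddableRow k (t+1) (ascP k j m t) m := by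
    have hpr : ascP k j m t m = m + t + 1 := by simp only [ascP]; split_ifs <;> omega
    refine ⟨?_, ?_⟩
    · rw [hpr, resC_eq_of k m (m+t+1) (by omega) (t+1) (by omega) 0 (by push_cast; omega)]
      split_ifs <;> omega
    · rcases Nat.eq_zero_or_pos m with h0 | h0
      · exact Or.inl h0
      · right
        have h2 : 2*k - j + m ≤ ascP k j m t (m-1) := by
          simp only [ascP]; split_ifs <;> omega
        omega
  unfold hjAct
  rw [if_pos ⟨m, haddm⟩]
  funext r
  by_cases hA : r < m
  · by_cases hA1 : j + r = t + m + 1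
    · -- row above m, bumped at this step
      have hpr : ascP k j m t r = 2*k - j + m := by simp only [ascP]; split_ifs <;> omega
      have hres : resC k r (ascP k j m t r) = ((t+1 : ℕ) : ℤ) := by
        rw [hpr, resC_eq_of k r _ (by omega) (2*k - (t+1)) (by omega) 0 (by push_cast; omega)]
        split_ifs <;> omega
      have hcond : r = 0 ∨ ascP k j m t r < ascP k j m t (r-1) := by
        rcases Nat.eq_zero_or_pos r with h0 | h0
        · exact Or.inl h0
        · right
          have h2 : ascP k j m t (r-1) = 2*k - j + m + 1 := by
            simp only [ascP]; split_ifs <;> omega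
          omega
      have hadd : AddableRow k (t+1) (ascP k j m t) r := ⟨hres, hcond⟩
      rw [if_pos hadd]
      simp only [ascP]; split_ifs <;> omega
    · by_cases hA2 : j + r ≤ t + m
      · -- already bumped
        have hpr : ascP k j m t r = 2*k - j + m + 1 := by simp only [ascP]; split_ifs <;> omega
        by_cases hA3 : j + r = m + 1
        · rw [if_neg (by
            rintro ⟨ha, -⟩
            rw [hpr, resC_eq_of k r _ (by omega) 0 (by omega) 1 (by push_cast; omega)] at ha
            split_ifs at ha <;> omega)]
          simp only [ascP]; split_ifs <;> omega
        · rw [if_neg (by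
            rintro ⟨ha, -⟩
            rw [hpr, resC_eq_of k r _ (by omega) (2*k - (j+r-m-1)) (by omega) 0
              (by push_cast; omega)] at ha
            split_ifs at ha <;> omega)]
          simp only [ascP]; split_ifs <;> omega
      · -- not yet bumped
        have hpr : ascP k j m t r = 2*k - j + m := by simp only [ascP]; split_ifs <;> omega
        rw [if_neg (by
          rintro ⟨ha, -⟩
          rw [hpr, resC_eq_of k r _ (by omega) (2*k - (j+r-m)) (by omega) 0
            (by push_cast; omega)] at ha
          split_ifs at ha <;> omega)]
        simp only [ascP]; split_ifs <;> omega
  · by_cases hB : r = m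
    · subst hB
      rw [if_pos haddm]
      simp only [ascP]; split_ifs <;> omega
    · -- r > m
      by_cases hC1 : r ≤ m + t
      · have hpr : ascP k j m t r = m + 1 := by simp only [ascP]; split_ifs <;> omega
        by_cases hCa : r = m + 1
        · rw [if_neg (by
            rintro ⟨ha, -⟩
            rw [hpr, resC_eq_of k r _ (by omega) 0 (by omega) 0 (by push_cast; omega)] at ha
            split_ifs at ha <;> omega)]
          simp only [ascP]; split_ifs <;> omega
        · rw [if_neg (by
            rintro ⟨ha, -⟩
            rw [hpr, resC_eq_of k r _ (by omega) (2*k - (r-m-1)) (by omega) (-1)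
              (by push_cast; omega)] at ha
            split_ifs at ha <;> omega)]
          simp only [ascP]; split_ifs <;> omega
      · by_cases hC2 : r = m + t + 1
        · -- bumped at this step
          have hpr : ascP k j m t r = m := by simp only [ascP]; split_ifs <;> omega
          have hres : resC k r (ascP k j m t r) = ((t+1 : ℕ) : ℤ) := by
            rw [hpr, resC_eq_of k r _ (by omega) (2*k - (t+1)) (by omega) (-1)
              (by push_cast; omega)]
            split_ifs <;> omega
          have hcond : r = 0 ∨ ascP k j m t r < ascP k j m t (r-1) := by
            right
            have h2 : m < ascP k j m t (r-1) := by
              simp only [ascP]; split_ifs <;> omega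
            omega
          have hadd : AddableRow k (t+1) (ascP k j m t) r := ⟨hres, hcond⟩
          rw [if_pos hadd]
          simp only [ascP]; split_ifs <;> omega
        · by_cases hC3 : r < 2*k - j + m
          · have hpr : ascP k j m t r = m := by simp only [ascP]; split_ifs <;> omega
            by_cases hC3a : r + t + 1 = m + 2*k
            · -- residue matches but not addable (flat region)
              have hpr1 : ascP k j m t (r-1) = m := by simp only [ascP]; split_ifs <;> omega
              rw [if_neg (by
                rintro ⟨-, hb⟩
                rcases hb with hb | hb
                · omega
                · rw [hpr, hpr1] at hb; omega)]
              simp only [ascP]; split_ifs <;> omega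
            · rw [if_neg (by
                rintro ⟨ha, -⟩
                rw [hpr, resC_eq_of k r _ (by omega) (2*k - (r-m)) (by omega) (-1)
                  (by push_cast; omega)] at ha
                split_ifs at ha <;> omega)]
              simp only [ascP]; split_ifs <;> omega
          · by_cases hC4 : r = 2*k - j + m
            · by_cases hC4a : j ≤ t + 1
              · have hpr : ascP k j m t r = m := by simp only [ascP]; split_ifs <;> omega
                by_cases hC4a1 : j = t + 1
                · -- residue j matches but row above is equal
                  have hpr1 : ascP k j m t (r-1) = m := by
                    simp only [ascP]; split_ifs <;> omega
                  rw [if_neg (by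
                    rintro ⟨-, hb⟩
                    rcases hb with hb | hb
                    · omega
                    · rw [hpr, hpr1] at hb; omega)]
                  simp only [ascP]; split_ifs <;> omega
                · rw [if_neg (by
                    rintro ⟨ha, -⟩
                    rw [hpr, resC_eq_of k r _ (by omega) j (by omega) (-1)
                      (by push_cast; omega)] at ha
                    split_ifs at ha <;> omega)]
                  simp only [ascP]; split_ifs <;> omega
              · by_cases hC4b : j ≤ t + m + 1
                · -- growing first column cell of last row
                  have hpr : ascP k j m t r = t + 1 + m - j := by
                    simp only [ascP]; split_ifs <;> omega
                  have hres : resC k r (ascP k j m t r) = ((t+1 : ℕ) : ℤ) := by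
                    rw [hpr, resC_eq_of k r _ (by omega) (t+1) (by omega) (-1)
                      (by push_cast; omega)]
                    split_ifs <;> omega
                  have hcond : r = 0 ∨ ascP k j m t r < ascP k j m t (r-1) := by
                    right
                    have h2 : ascP k j m t (r-1) = m := by
                      simp only [ascP]; split_ifs <;> omega
                    omega
                  have hadd : AddableRow k (t+1) (ascP k j m t) r := ⟨hres, hcond⟩
                  rw [if_pos hadd]
                  simp only [ascP]; split_ifs <;> omega
                · -- last row not started yet
                  have hpr : ascP k j m t r = 0 := by simp only [ascP]; split_ifs <;> omega
                  rw [if_neg (by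
                    rintro ⟨ha, -⟩
                    rw [hpr, resC_eq_of k r _ (by omega) (j - m) (by omega) (-1)
                      (by push_cast; omega)] at ha
                    split_ifs at ha <;> omega)]
                  simp only [ascP]; split_ifs <;> omega
            · -- r > 2k - j + m
              have hpr : ascP k j m t r = 0 := by simp only [ascP]; split_ifs <;> omega
              by_cases hC5 : r = 2*k - j + m + 1
              · rw [if_neg (by
                  rintro ⟨ha, hb⟩
                  rw [hpr, resC_eq_of k r _ (by omega) (j - m - 1) (by omega) (-1)
                    (by push_cast; omega)] at ha
                  have hd : j = t + m + 2 := by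
                    split_ifs at ha <;> omega
                  have hpr1 : ascP k j m t (r-1) = 0 := by
                    simp only [ascP]; split_ifs <;> omega
                  rcases hb with hb | hb
                  · omega
                  · rw [hpr, hpr1] at hb; omega)]
                simp only [ascP]; split_ifs <;> omega
              · have hpr1 : ascP k j m t (r-1) = 0 := by
                  simp only [ascP]; split_ifs <;> omega
                rw [if_neg (by
                  rintro ⟨-, hb⟩
                  rcases hb with hb | hb
                  · omega
                  · rw [hpr, hpr1] at hb; omega)]
                simp only [ascP]; split_ifs <;> omega

set_option maxHeartbeats 1000000 in
lemma stepD (k j m t : ℕ) (hk : 2 ≤ k) (hj1 : 1 ≤ j) (hjk : j + 1 ≤ k)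
    (hm : m < j) (hjt : j ≤ t) (ht : t < k) :
    hjAct k t (descP k j m (t+1)) = descP k j m t := by
  have haddm : AddableRow k t (descP k j m (t+1)) m := by
    have hpr : descP k j m (t+1) m = m + (2*k - (t+1)) + 1 := by
      simp only [descP]; split_ifs <;> omega
    refine ⟨?_, ?_⟩
    · rw [hpr, resC_eq_of k m _ (by omega) (2*k - t) (by omega) 0 (by push_cast; omega)]
      split_ifs <;> omega
    · rcases Nat.eq_zero_or_pos m with h0 | h0
      · exact Or.inl h0
      · right
        have h2 : descP k j m (t+1) (m-1) = 2*k - j + m + 1 := by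
          simp only [descP]; split_ifs <;> omega
        omega
  unfold hjAct
  rw [if_pos ⟨m, haddm⟩]
  funext r
  by_cases hA : r < m
  · have hpr : descP k j m (t+1) r = 2*k - j + m + 1 := by
      simp only [descP]; split_ifs <;> omega
    by_cases hA1 : j + r = m + 1
    · rw [if_neg (by
        rintro ⟨ha, -⟩
        rw [hpr, resC_eq_of k r _ (by omega) 0 (by omega) 1 (by push_cast; omega)] at ha
        split_ifs at ha <;> omega)]
      simp only [descP]; split_ifs <;> omega
    · rw [if_neg (by
        rintro ⟨ha, -⟩
        rw [hpr, resC_eq_of k r _ (by omega) (2*k - (j+r-m-1)) (by omega) 0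
          (by push_cast; omega)] at ha
        split_ifs at ha <;> omega)]
      simp only [descP]; split_ifs <;> omega
  · by_cases hB : r = m
    · subst hB
      rw [if_pos haddm]
      simp only [descP]; split_ifs <;> omega
    · -- r > m
      by_cases hC1 : r ≤ m + (2*k - (t+1))
      · have hpr : descP k j m (t+1) r = m + 1 := by
          simp only [descP]; split_ifs <;> omega
        by_cases hCa : r = m + 1
        · rw [if_neg (by
            rintro ⟨ha, -⟩
            rw [hpr, resC_eq_of k r _ (by omega) 0 (by omega) 0 (by push_cast; omega)] at ha
            split_ifs at ha <;> omega)]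
          simp only [descP]; split_ifs <;> omega
        · by_cases hCt : r = m + t + 1
          · -- residue t matches but row above is equal
            have hpr1 : descP k j m (t+1) (r-1) = m + 1 := by
              simp only [descP]; split_ifs <;> omega
            rw [if_neg (by
              rintro ⟨-, hb⟩
              rcases hb with hb | hb
              · omega
              · rw [hpr, hpr1] at hb; omega)]
            simp only [descP]; split_ifs <;> omega
          · rw [if_neg (by
              rintro ⟨ha, -⟩
              rw [hpr, resC_eq_of k r _ (by omega) (2*k - (r-m-1)) (by omega) (-1)
                (by push_cast; omega)] at ha
              split_ifs at ha <;> omega)]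
            simp only [descP]; split_ifs <;> omega
      · by_cases hC2 : r = m + (2*k - t)
        · -- bumped at this step
          have hpr : descP k j m (t+1) r = m := by
            simp only [descP]; split_ifs <;> omega
          have hres : resC k r (descP k j m (t+1) r) = ((t : ℕ) : ℤ) := by
            rw [hpr, resC_eq_of k r _ (by omega) t (by omega) (-1) (by push_cast; omega)]
            split_ifs <;> omega
          have hcond : r = 0 ∨ descP k j m (t+1) r < descP k j m (t+1) (r-1) := by
            right
            have h2 : descP k j m (t+1) (r-1) = m + 1 := by
              simp only [descP]; split_ifs <;> omega
            omega
          have hadd : AddableRow k t (descP k j m (t+1)) r := ⟨hres, hcond⟩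
          rw [if_pos hadd]
          simp only [descP]; split_ifs <;> omega
        · by_cases hC3 : r ≤ 2*k - j + m
          · have hpr : descP k j m (t+1) r = m := by
              simp only [descP]; split_ifs <;> omega
            rw [if_neg (by
              rintro ⟨ha, -⟩
              rw [hpr, resC_eq_of k r _ (by omega) (2*k - (r-m)) (by omega) (-1)
                (by push_cast; omega)] at ha
              split_ifs at ha <;> omega)]
            simp only [descP]; split_ifs <;> omega
          · -- r > 2k - j + m
            have hpr : descP k j m (t+1) r = 0 := by
              simp only [descP]; split_ifs <;> omega
            by_cases hC5 : r = 2*k - j + m + 1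
            · rw [if_neg (by
                rintro ⟨ha, -⟩
                rw [hpr, resC_eq_of k r _ (by omega) (j - m - 1) (by omega) (-1)
                  (by push_cast; omega)] at ha
                split_ifs at ha <;> omega)]
              simp only [descP]; split_ifs <;> omega
            · have hpr1 : descP k j m (t+1) (r-1) = 0 := by
                simp only [descP]; split_ifs <;> omega
              rw [if_neg (by
                rintro ⟨-, hb⟩
                rcases hb with hb | hb
                · omega
                · rw [hpr, hpr1] at hb; omega)]
              simp only [descP]; split_ifs <;> omega

set_option maxHeartbeats 1000000 in
lemma step0 (k j m : ℕ) (hk : 2 ≤ k) (hj1 : 1 ≤ j) (hjk : j + 1 ≤ k) (hm : m < j) :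
    hjAct k 0 (startP k j m) = ascP k j m 0 := by
  have haddm : AddableRow k 0 (startP k j m) m := by
    have hpr : startP k j m m = m := by simp only [startP]; split_ifs <;> omega
    refine ⟨?_, ?_⟩
    · rw [hpr, resC_eq_of k m m (by omega) 0 (by omega) 0 (by push_cast; omega)]
      split_ifs <;> omega
    · rcases Nat.eq_zero_or_pos m with h0 | h0
      · exact Or.inl h0
      · right
        have h2 : startP k j m (m-1) = 2*k - j + m := by
          simp only [startP]; split_ifs <;> omega
        omega
  unfold hjAct
  rw [if_pos ⟨m, haddm⟩]
  funext r
  by_cases hA : r < m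
  · have hpr : startP k j m r = 2*k - j + m := by simp only [startP]; split_ifs <;> omega
    rw [if_neg (by
      rintro ⟨ha, -⟩
      rw [hpr, resC_eq_of k r _ (by omega) (2*k - (j+r-m)) (by omega) 0
        (by push_cast; omega)] at ha
      split_ifs at ha <;> omega)]
    simp only [startP, ascP]; split_ifs <;> omega
  · by_cases hB : r = m
    · subst hB
      rw [if_pos haddm]
      simp only [startP, ascP]; split_ifs <;> omega
    · by_cases hC : r < 2*k - j + m
      · have hpr : startP k j m r = m := by simp only [startP]; split_ifs <;> omega
        rw [if_neg (by
          rintro ⟨ha, -⟩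
          rw [hpr, resC_eq_of k r _ (by omega) (2*k - (r-m)) (by omega) (-1)
            (by push_cast; omega)] at ha
          split_ifs at ha <;> omega)]
        simp only [startP, ascP]; split_ifs <;> omega
      · have hpr : startP k j m r = 0 := by simp only [startP]; split_ifs <;> omega
        by_cases hD : r = 2*k - j + m
        · rw [if_neg (by
            rintro ⟨ha, -⟩
            rw [hpr, resC_eq_of k r _ (by omega) (j - m) (by omega) (-1)
              (by push_cast; omega)] at ha
            split_ifs at ha <;> omega)]
          simp only [startP, ascP]; split_ifs <;> omega
        · have hpr1 : startP k j m (r-1) = 0 := by simp only [startP]; split_ifs <;> omega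
          rw [if_neg (by
            rintro ⟨-, hb⟩
            rcases hb with hb | hb
            · omega
            · rw [hpr, hpr1] at hb; omega)]
          simp only [startP, ascP]; split_ifs <;> omega


lemma asc_k_eq_desc_k (k j m : ℕ) (hk : 2 ≤ k) (hj1 : 1 ≤ j) (hjk : j + 1 ≤ k) (hm : m < j) :
    ascP k j m k = descP k j m k := by
  funext r; simp only [ascP, descP]; split_ifs <;> omega

lemma desc_j_eq_start (k j m : ℕ) (hk : 2 ≤ k) (hj1 : 1 ≤ j) (hjk : j + 1 ≤ k) (hm : m < j) :
    descP k j m j = startP k j (m+1) := by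
  funext r; simp only [descP, startP]; split_ifs <;> omega

lemma fold_asc (k j m : ℕ) (hk : 2 ≤ k) (hj1 : 1 ≤ j) (hjk : j + 1 ≤ k) (hm : m < j) :
    ∀ t, t ≤ k →
      ((List.range (t+1)).reverse).foldr (fun idx q => hjAct k idx q) (startP k j m)
        = ascP k j m t := by
  intro t
  induction t with
  | zero =>
    intro _
    rw [show List.range 1 = [0] by rfl, List.reverse_singleton, List.foldr_cons, List.foldr_nil]
    exact step0 k j m hk hj1 hjk hm
  | succ t ih =>
    intro h
    rw [List.range_succ, List.reverse_append, List.reverse_singleton, List.singleton_append,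
      List.foldr_cons, ih (by omega)]
    exact stepA k j m t hk hj1 hjk hm (by omega)

lemma fold_desc (k j m : ℕ) (hk : 2 ≤ k) (hj1 : 1 ≤ j) (hjk : j + 1 ≤ k) (hm : m < j) :
    ∀ d, j + d ≤ k →
      (List.range' j d).foldr (fun idx q => hjAct k idx q) (descP k j m (j+d))
        = descP k j m j := by
  intro d
  induction d with
  | zero => intro _; rfl
  | succ d ih =>
    intro h
    rw [List.range'_concat, List.foldr_append, List.foldr_cons, List.foldr_nil,
      show j + 1*d = j + d by omega, show j + (d+1) = (j+d) + 1 by omega,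
      stepD k j m (j+d) hk hj1 hjk hm (by omega) (by omega)]
    exact ih (by omega)


/-- For `1 ≤ j ≤ k - 1`, applying the word `((s_j s_{j+1} ⋯ s_{k-1})(s_k s_{k-1} ⋯ s_1 s_0))^j`
(rightmost generator first) to the empty partition yields the symmetric `2k`-core
`((2k)^j, j^(2k-j))`: `j` parts equal to `2k` followed by `2k - j` parts equal to `j`. -/
theorem stmt8 (k : ℕ) (hk : 2 ≤ k) (j : ℕ) (hj1 : 1 ≤ j) (hjk : j ≤ k - 1) :
    ((List.replicate j (List.range' j (k - j) ++ (List.range (k + 1)).reverse)).flatten).foldr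
        (fun idx q => hjAct k idx q) (fun _ => 0)
      = fun r => if r < j then 2 * k else if r < 2 * k then j else 0 := by
  have hjk' : j + 1 ≤ k := by omega
  have key : ∀ n, n ≤ j →
      ((List.replicate n (List.range' j (k - j) ++ (List.range (k + 1)).reverse)).flatten).foldr
        (fun idx q => hjAct k idx q) (fun _ => 0) = startP k j n := by
    intro n
    induction n with
    | zero =>
      intro _
      rw [List.replicate_zero, List.flatten_nil, List.foldr_nil]
      funext r; simp only [startP]; split_ifs <;> omega
    | succ n ih =>
      intro hn
      rw [List.replicate_succ, List.flatten_cons, List.foldr_append, ih (by omega),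
        List.foldr_append, fold_asc k j n hk hj1 hjk' (by omega) k le_rfl,
        asc_k_eq_desc_k k j n hk hj1 hjk' (by omega),
        show descP k j n k = descP k j n (j + (k - j)) by rw [show j + (k-j) = k by omega],
        fold_desc k j n hk hj1 hjk' (by omega) (k-j) (by omega)]
      exact desc_j_eq_start k j n hk hj1 hjk' (by omega)
  rw [key j le_rfl]
  funext r; simp only [startP]; split_ifs <;> omega
end
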